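/- Let k be a field of characteristic ≠ 2, and let φ be a continuous k-algebra automorphism of k[[t]] with φ(t) = a1·t + a2·t^2 + a3·t^3 + ... (a1 ∈ k×). Then φ maps the ramphoid cusp algebra R = k ⊕ k·t^2 ⊕ t^4 k[[t]] into itself if and only if a2 = 0. -/

import Mathlib

/-!
If `u` has no constant term, the `t` and `t³` coefficients of `g(u)` are `g₁u₁` and
`g₁u₃ + 2g₂u₁u₂ + g₃u₁³`. For `g ∈ R` (`g₁ = g₃ = 0`) the only obstruction is thus `2g₂u₁u₂`,
which vanishes for all `g` iff `u₂ = 0`; the test case `g = t²` has `g₂ = 1`.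
-/

open PowerSeries

variable (k : Type*) [Field k]

/-- The ramphoid cusp algebra `k ⊕ k·t² ⊕ t⁴·k[[t]] = k[[t²,t⁵]]`. -/
noncomputable def ramphoid : Submodule k (PowerSeries k) :=
  LinearMap.ker (coeff (R := k) 1) ⊓ LinearMap.ker (coeff (R := k) 3)

/-- Substitution `g ↦ g(u)` for a power series `u` with zero constant term:
the `m`-th coefficient of `g(u)` only involves the terms of `g` of degree ≤ `m`. -/
noncomputable def subst (u g : PowerSeries k) : PowerSeries k :=
  PowerSeries.mk fun m =>
    coeff (R := k) m (∑ n ∈ Finset.range (m + 1), coeff (R := k) n g • u ^ n)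

variable {k}

lemma PowerSeries.coeff_three_sq {R : Type*} [CommSemiring R] {u : PowerSeries R}
    (hu0 : coeff 0 u = 0) : coeff 3 (u ^ 2) = 2 * coeff 1 u * coeff 2 u := by
  obtain ⟨v, rfl⟩ := (X_dvd_iff (φ := u)).mpr (by rwa [← coeff_zero_eq_constantCoeff_apply])
  rw [mul_pow, coeff_X_pow_mul', pow_two, coeff_mul]
  simp [coeff_succ_X_mul, Finset.Nat.antidiagonal_succ]
  ring

lemma PowerSeries.coeff_three_cube {R : Type*} [CommSemiring R] {u : PowerSeries R}
    (hu0 : coeff 0 u = 0) : coeff 3 (u ^ 3) = coeff 1 u ^ 3 := by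
  obtain ⟨v, rfl⟩ := (X_dvd_iff (φ := u)).mpr (by rwa [← coeff_zero_eq_constantCoeff_apply])
  simp [mul_pow, coeff_X_pow_mul', coeff_succ_X_mul]

lemma mem_ramphoid_iff {g : PowerSeries k} :
    g ∈ ramphoid k ↔ coeff 1 g = 0 ∧ coeff 3 g = 0 :=
  Submodule.mem_inf

lemma coeff_one_subst (u g : PowerSeries k) :
    coeff 1 (subst k u g) = coeff 1 g * coeff 1 u := by
  simp [_root_.subst, map_sum, Finset.sum_range_succ]

lemma coeff_three_subst {u : PowerSeries k} (hu0 : coeff 0 u = 0) (g : PowerSeries k) :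
    coeff 3 (subst k u g) = coeff 1 g * coeff 3 u
      + coeff 2 g * (2 * coeff 1 u * coeff 2 u) + coeff 3 g * coeff 1 u ^ 3 := by
  simp [_root_.subst, map_sum, Finset.sum_range_succ, coeff_three_sq hu0, coeff_three_cube hu0]

/-- for char(k) ≠ 2, a continuous automorphism of `k[[t]]` given by
`t ↦ u = a₁t + a₂t² + ⋯` (`a₁ ≠ 0`) preserves the ramphoid cusp algebra iff
`a₂ = 0`. -/
theorem stmt_10 (h2 : (2 : k) ≠ 0) (u : PowerSeries k)
    (hu0 : coeff (R := k) 0 u = 0) (hu1 : coeff (R := k) 1 u ≠ 0) :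
    (∀ g ∈ ramphoid k, subst k u g ∈ ramphoid k) ↔ coeff (R := k) 2 u = 0 := by
  constructor
  · intro h
    have hX2 : (X : PowerSeries k) ^ 2 ∈ ramphoid k := by
      simp [mem_ramphoid_iff, coeff_X_pow]
    have h3 := (mem_ramphoid_iff.mp (h _ hX2)).2
    simp only [coeff_three_subst hu0, coeff_X_pow] at h3
    simpa [h2, hu1] using h3
  · intro ha2 g hg
    obtain ⟨hg1, hg3⟩ := mem_ramphoid_iff.mp hg
    rw [mem_ramphoid_iff, coeff_one_subst, coeff_three_subst hu0, hg1, hg3, ha2]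
    simp
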